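/- arXiv:1009.3881 — 3 statements merged into one kernel-verified Lean document; each statement's English description precedes it below -/
import Mathlib

section
/- Let k>0, let r₀<R be real numbers, and let Z be a discrete subset of [r₀,R) (i.e. with no accumulation point in [r₀,R)). Let u, ū : [r₀,R) → ℝ be continuously differentiable on [r₀,R) and twice differentiable at every point of [r₀,R)∖Z, and let f, f̄ : [r₀,R) → ℝ be locally integrable functions with u''(r) − k²·u(r) = f(r) and ū''(r) − k²·ū(r) = f̄(r) for every r ∈ [r₀,R)∖Z. If f(r) ≤ f̄(r) for all r ∈ [r₀,R)∖Z, u(r₀) ≤ ū(r₀), and u'(r₀) − k·u(r₀) ≤ ū'(r₀) − k·ū(r₀), then u(r) ≤ ū(r), u'(r) − k·u(r) ≤ ū'(r) − k·ū(r), and u'(r) ≤ ū'(r) for every r ∈ [r₀,R). -/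
open Set MeasureTheory Real

lemma mono_base (F : ℝ → ℝ) (a b : ℝ) (hab : a ≤ b) (hc : ContinuousOn F (Set.Icc a b))
    (hd : ∀ x ∈ Set.Ioo a b, ∃ d, 0 ≤ d ∧ HasDerivAt F d x) : F a ≤ F b := by
  have hm : MonotoneOn F (Set.Icc a b) := by
    apply monotoneOn_of_deriv_nonneg (convex_Icc a b) hc
    · rw [interior_Icc]
      intro x hx
      obtain ⟨d, _, hder⟩ := hd x hx
      exact hder.differentiableAt.differentiableWithinAt
    · rw [interior_Icc]
      intro x hx
      obtain ⟨d, hd0, hder⟩ := hd x hx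
      rw [hder.deriv]; exact hd0
  exact hm (Set.left_mem_Icc.2 hab) (Set.right_mem_Icc.2 hab) hab

lemma mono_aux : ∀ (n : ℕ) (s : Finset ℝ), s.card ≤ n → ∀ (F : ℝ → ℝ) (a b : ℝ), a ≤ b →
    ContinuousOn F (Set.Icc a b) →
    (∀ x ∈ Set.Ioo a b, x ∉ s → ∃ d, 0 ≤ d ∧ HasDerivAt F d x) → F a ≤ F b := by
  intro n
  induction n with
  | zero =>
    intro s hs F a b hab hc hd
    have hse : s = ∅ := Finset.card_eq_zero.1 (Nat.le_zero.1 hs)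
    exact mono_base F a b hab hc fun x hx => hd x hx (by simp [hse])
  | succ n ih =>
    intro s hs F a b hab hc hd
    by_cases hne : ((s.filter (· ∈ Set.Ioo a b))).Nonempty
    · set t := s.filter (· ∈ Set.Ioo a b) with ht
      set c := t.max' hne with hcdef
      have hcmem : c ∈ t := t.max'_mem hne
      have hcioo : c ∈ Set.Ioo a b := (Finset.mem_filter.1 hcmem).2
      have hcs : c ∈ s := (Finset.mem_filter.1 hcmem).1
      have h2 : F c ≤ F b := by
        apply mono_base F c b hcioo.2.le (hc.mono (Set.Icc_subset_Icc hcioo.1.le le_rfl))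
        intro x hx
        apply hd x ⟨hcioo.1.trans hx.1, hx.2⟩
        intro hxs
        have : x ∈ t := Finset.mem_filter.2 ⟨hxs, ⟨hcioo.1.trans hx.1, hx.2⟩⟩
        exact absurd (t.le_max' x this) (not_le.2 hx.1)
      have h1 : F a ≤ F c := by
        apply ih (s.erase c) ?_ F a c hcioo.1.le (hc.mono (Set.Icc_subset_Icc le_rfl hcioo.2.le))
        · intro x hx hxs
          apply hd x ⟨hx.1, hx.2.trans hcioo.2⟩
          intro hxs'
          exact hxs (Finset.mem_erase.2 ⟨ne_of_lt hx.2, hxs'⟩)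
        · have := Finset.card_erase_of_mem hcs
          omega
      linarith
    · exact mono_base F a b hab hc fun x hx =>
        hd x hx (fun hxs => hne ⟨x, Finset.mem_filter.2 ⟨hxs, hx⟩⟩)

/-- Comparison lemma for the ODE `u'' − k²u = f` off a discrete set `Z`,
for globally `C¹` functions on `[r₀, R)`. -/
theorem stmt_0
    (k r₀ R : ℝ) (hk : 0 < k) (hr : r₀ < R)
    (Z : Set ℝ) (hZ : Z ⊆ Set.Ico r₀ R)
    (hZdisc : ∀ x ∈ Set.Ico r₀ R, ¬ AccPt x (Filter.principal Z))
    (u u' u'' v v' v'' f g : ℝ → ℝ)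
    -- u is C¹ on [r₀, R), with derivative u'
    (hu' : ∀ r ∈ Set.Ico r₀ R, HasDerivWithinAt u (u' r) (Set.Ico r₀ R) r)
    (hu'cont : ContinuousOn u' (Set.Ico r₀ R))
    -- and twice differentiable off Z, with second derivative u''
    (hu'' : ∀ r ∈ Set.Ico r₀ R \ Z, HasDerivWithinAt u' (u'' r) (Set.Ico r₀ R) r)
    -- ū (= v) is C¹ on [r₀, R), with derivative v'
    (hv' : ∀ r ∈ Set.Ico r₀ R, HasDerivWithinAt v (v' r) (Set.Ico r₀ R) r)
    (hv'cont : ContinuousOn v' (Set.Ico r₀ R))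
    (hv'' : ∀ r ∈ Set.Ico r₀ R \ Z, HasDerivWithinAt v' (v'' r) (Set.Ico r₀ R) r)
    -- f, f̄ (= g) are locally integrable
    (hf : LocallyIntegrableOn f (Set.Ico r₀ R))
    (hg : LocallyIntegrableOn g (Set.Ico r₀ R))
    -- the differential equations off Z
    (hODEu : ∀ r ∈ Set.Ico r₀ R \ Z, u'' r - k ^ 2 * u r = f r)
    (hODEv : ∀ r ∈ Set.Ico r₀ R \ Z, v'' r - k ^ 2 * v r = g r)
    -- the comparison hypotheses
    (hfg : ∀ r ∈ Set.Ico r₀ R \ Z, f r ≤ g r)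
    (h0 : u r₀ ≤ v r₀)
    (h1 : u' r₀ - k * u r₀ ≤ v' r₀ - k * v r₀) :
    ∀ r ∈ Set.Ico r₀ R,
      u r ≤ v r ∧ u' r - k * u r ≤ v' r - k * v r ∧ u' r ≤ v' r := by
  -- finiteness of Z on compact subintervals
  have hfin : ∀ b, b < R → (Z ∩ Set.Icc r₀ b).Finite := by
    intro b hb
    by_contra h
    rw [← Set.not_infinite, not_not] at h
    obtain ⟨x, hxK, hacc⟩ := h.exists_accPt_of_subset_isCompact
      isCompact_Icc Set.inter_subset_right
    exact hZdisc x ⟨hxK.1, lt_of_le_of_lt hxK.2 hb⟩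
      (hacc.mono (Filter.principal_mono.2 Set.inter_subset_left))
  have hucont : ContinuousOn u (Set.Ico r₀ R) := fun x hx => (hu' x hx).continuousWithinAt
  have hvcont : ContinuousOn v (Set.Ico r₀ R) := fun x hx => (hv' x hx).continuousWithinAt
  -- Step 1 : W := (v' - u') - k (v - u) is nonnegative on [r₀, R)
  have key1 : ∀ x ∈ Set.Ico r₀ R, u' x - k * u x ≤ v' x - k * v x := by
    intro x hx
    set F : ℝ → ℝ := fun s => Real.exp (k*s) * ((v' s - u' s) - k * (v s - u s)) with hFdef
    have hsub : Set.Icc r₀ x ⊆ Set.Ico r₀ R := Set.Icc_subset_Ico_right hx.2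
    have hFr : F r₀ ≤ F x := by
      have hfinx := hfin x hx.2
      apply mono_aux hfinx.toFinset.card hfinx.toFinset le_rfl F r₀ x hx.1
      · apply ContinuousOn.mul
        · exact (Real.continuous_exp.comp (continuous_const.mul continuous_id)).continuousOn
        · exact ((hv'cont.mono hsub).sub (hu'cont.mono hsub)).sub
            (continuousOn_const.mul ((hvcont.mono hsub).sub (hucont.mono hsub)))
      · intro y hy hys
        have hyI : y ∈ Set.Ico r₀ R := ⟨hy.1.le, hy.2.trans hx.2⟩
        have hyZ : y ∉ Z := fun h => hys (hfinx.mem_toFinset.2 ⟨h, hy.1.le, hy.2.le⟩)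
        have hmem : y ∈ Set.Ico r₀ R \ Z := ⟨hyI, hyZ⟩
        have hnhds : Set.Ico r₀ R ∈ nhds y := Ico_mem_nhds hy.1 hyI.2
        have Du : HasDerivAt u (u' y) y := (hu' y hyI).hasDerivAt hnhds
        have Dv : HasDerivAt v (v' y) y := (hv' y hyI).hasDerivAt hnhds
        have Du' : HasDerivAt u' (u'' y) y := (hu'' y hmem).hasDerivAt hnhds
        have Dv' : HasDerivAt v' (v'' y) y := (hv'' y hmem).hasDerivAt hnhds
        have hexp : HasDerivAt (fun s => Real.exp (k*s)) (Real.exp (k*y) * k) y := by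
          have h : HasDerivAt (fun s : ℝ => k*s) (k * 1) y := (hasDerivAt_id y).const_mul k
          simpa using h.exp
        have hW : HasDerivAt (fun s => (v' s - u' s) - k*(v s - u s))
            ((v'' y - u'' y) - k*(v' y - u' y)) y := (Dv'.sub Du').sub ((Dv.sub Du).const_mul k)
        refine ⟨_, ?_, hexp.mul hW⟩
        have e1 := hODEu y hmem
        have e2 := hODEv y hmem
        have e3 := hfg y hmem
        have h4 : v'' y - u'' y - k^2*(v y - u y) = g y - f y := by ring_nf; ring_nf at e1 e2; linarith
        have h5 : Real.exp (k*y) * k * ((v' y - u' y) - k*(v y - u y))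
            + Real.exp (k*y) * ((v'' y - u'' y) - k*(v' y - u' y))
            = Real.exp (k*y) * (g y - f y) := by linear_combination Real.exp (k*y) * h4
        rw [h5]
        exact mul_nonneg (Real.exp_pos _).le (by linarith)
    have hF0 : 0 ≤ F r₀ := mul_nonneg (Real.exp_pos _).le (by linarith)
    have hFx : (0:ℝ) ≤ Real.exp (k*x) * ((v' x - u' x) - k * (v x - u x)) := le_trans hF0 hFr
    have : (0:ℝ) ≤ (v' x - u' x) - k * (v x - u x) :=
      le_of_mul_le_mul_left (by simpa using hFx) (Real.exp_pos (k*x))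
    linarith
  -- Step 2 : u ≤ v on [r₀, R)
  have key2 : ∀ x ∈ Set.Ico r₀ R, u x ≤ v x := by
    intro x hx
    set G : ℝ → ℝ := fun s => Real.exp (-(k*s)) * (v s - u s) with hGdef
    have hsub : Set.Icc r₀ x ⊆ Set.Ico r₀ R := Set.Icc_subset_Ico_right hx.2
    have hGr : G r₀ ≤ G x := by
      apply mono_base G r₀ x hx.1
      · exact ((Real.continuous_exp.comp (continuous_const.mul continuous_id).neg).continuousOn).mul
          ((hvcont.mono hsub).sub (hucont.mono hsub))
      · intro y hy
        have hyI : y ∈ Set.Ico r₀ R := ⟨hy.1.le, hy.2.trans hx.2⟩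
        have hnhds : Set.Ico r₀ R ∈ nhds y := Ico_mem_nhds hy.1 hyI.2
        have Du : HasDerivAt u (u' y) y := (hu' y hyI).hasDerivAt hnhds
        have Dv : HasDerivAt v (v' y) y := (hv' y hyI).hasDerivAt hnhds
        have hexp : HasDerivAt (fun s => Real.exp (-(k*s))) (Real.exp (-(k*y)) * (-k)) y := by
          have h : HasDerivAt (fun s : ℝ => -(k*s)) (-(k * 1)) y :=
            ((hasDerivAt_id y).const_mul k).neg
          simpa using h.exp
        refine ⟨_, ?_, hexp.mul (Dv.sub Du)⟩
        have h5 : Real.exp (-(k*y)) * (-k) * (v y - u y)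
            + Real.exp (-(k*y)) * (v' y - u' y)
            = Real.exp (-(k*y)) * ((v' y - u' y) - k*(v y - u y)) := by ring
        rw [h5]
        exact mul_nonneg (Real.exp_pos _).le (by linarith [key1 y hyI])
    have hG0 : 0 ≤ G r₀ := mul_nonneg (Real.exp_pos _).le (by linarith)
    have hGx : (0:ℝ) ≤ Real.exp (-(k*x)) * (v x - u x) := le_trans hG0 hGr
    have : (0:ℝ) ≤ v x - u x :=
      le_of_mul_le_mul_left (by simpa using hGx) (Real.exp_pos (-(k*x)))
    linarith
  intro r hrm
  refine ⟨key2 r hrm, key1 r hrm, ?_⟩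
  have h2 := key1 r hrm
  have h3 := key2 r hrm
  nlinarith [mul_nonneg hk.le (sub_nonneg.2 h3)]
end

section
/- Let k>0, let r₀<R be real numbers, and let Z be a discrete subset of [r₀,R). Let u, ū : [r₀,R) → ℝ be continuously differentiable on [r₀,R) and twice differentiable at every point of [r₀,R)∖Z, and let f, f̄ : [r₀,R) → ℝ be locally integrable functions with u''(r) − k²·u(r) = f(r) and ū''(r) − k²·ū(r) = f̄(r) for every r ∈ [r₀,R)∖Z. Assume f(r) ≤ f̄(r) for all r ∈ [r₀,R)∖Z, u(r₀) ≤ ū(r₀), and u'(r₀) − k·u(r₀) ≤ ū'(r₀) − k·ū(r₀). If moreover there is a nontrivial interval [α,β] ⊆ [r₀,r] with α<β on which f < f̄ holds at every point not in Z, then u'(r) < ū'(r) (strict inequality). -/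
open Set MeasureTheory Real

/-- FTC-type inequality allowing a finite exceptional set. -/
lemma ftc_ineq_finite_except (S : Set ℝ) (hS : S.Finite) :
    ∀ (F φ : ℝ → ℝ) (a b : ℝ), a ≤ b → ContinuousOn F (Icc a b) →
    (∀ x ∈ Ioo a b, x ∉ S → HasDerivWithinAt F (φ x) (Ioi x) x) →
    IntegrableOn φ (Icc a b) →
    ∫ y in a..b, φ y ≤ F b - F a := by
  induction S, hS using Set.Finite.induction_on with
  | empty =>
    intro F φ a b hab hcont hder hint
    exact intervalIntegral.integral_le_sub_of_hasDeriv_right_of_le hab hcont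
      (fun x hx => hder x hx (notMem_empty x)) hint (fun x _ => le_rfl)
  | @insert z S hzS hSfin ih =>
    intro F φ a b hab hcont hder hint
    by_cases hz : z ∈ Ioo a b
    · have hii : ∀ c d : ℝ, a ≤ c → c ≤ d → d ≤ b → IntervalIntegrable φ volume c d := by
        intro c d hac hcd hdb
        rw [intervalIntegrable_iff_integrableOn_Icc_of_le hcd]
        exact hint.mono_set (Icc_subset_Icc hac hdb)
      have h1 : ∫ y in a..z, φ y ≤ F z - F a := by
        refine ih F φ a z hz.1.le (hcont.mono (Icc_subset_Icc le_rfl hz.2.le)) ?_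
          (hint.mono_set (Icc_subset_Icc le_rfl hz.2.le))
        intro x hx hxS
        exact hder x ⟨hx.1, hx.2.trans hz.2⟩ (by
          simp only [mem_insert_iff, not_or]
          exact ⟨hx.2.ne, hxS⟩)
      have h2 : ∫ y in z..b, φ y ≤ F b - F z := by
        refine ih F φ z b hz.2.le (hcont.mono (Icc_subset_Icc hz.1.le le_rfl)) ?_
          (hint.mono_set (Icc_subset_Icc hz.1.le le_rfl))
        intro x hx hxS
        exact hder x ⟨hz.1.trans hx.1, hx.2⟩ (by
          simp only [mem_insert_iff, not_or]
          exact ⟨hx.1.ne', hxS⟩)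
      have hadd : (∫ y in a..z, φ y) + ∫ y in z..b, φ y = ∫ y in a..b, φ y :=
        intervalIntegral.integral_add_adjacent_intervals
          (hii a z le_rfl hz.1.le hz.2.le) (hii z b hz.1.le hz.2.le le_rfl)
      linarith
    · refine ih F φ a b hab hcont ?_ hint
      intro x hx hxS
      refine hder x hx ?_
      simp only [mem_insert_iff, not_or]
      exact ⟨fun h => hz (h ▸ hx), hxS⟩

/-- Strict comparison lemma for the ODE `u'' − k²u = f` off a discrete set `Z`,
for globally `C¹` functions on `[r₀, R)`. -/
theorem stmt_1
    (k r₀ R : ℝ) (hk : 0 < k) (hr : r₀ < R)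
    (Z : Set ℝ) (hZ : Z ⊆ Set.Ico r₀ R)
    (hZdisc : ∀ x ∈ Set.Ico r₀ R, ¬ AccPt x (Filter.principal Z))
    (u u' u'' v v' v'' f g : ℝ → ℝ)
    -- u is C¹ on [r₀, R), with derivative u'
    (hu' : ∀ r ∈ Set.Ico r₀ R, HasDerivWithinAt u (u' r) (Set.Ico r₀ R) r)
    (hu'cont : ContinuousOn u' (Set.Ico r₀ R))
    -- and twice differentiable off Z, with second derivative u''
    (hu'' : ∀ r ∈ Set.Ico r₀ R \ Z, HasDerivWithinAt u' (u'' r) (Set.Ico r₀ R) r)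
    -- ū (= v) is C¹ on [r₀, R), with derivative v'
    (hv' : ∀ r ∈ Set.Ico r₀ R, HasDerivWithinAt v (v' r) (Set.Ico r₀ R) r)
    (hv'cont : ContinuousOn v' (Set.Ico r₀ R))
    (hv'' : ∀ r ∈ Set.Ico r₀ R \ Z, HasDerivWithinAt v' (v'' r) (Set.Ico r₀ R) r)
    -- f, f̄ (= g) are locally integrable
    (hf : LocallyIntegrableOn f (Set.Ico r₀ R))
    (hg : LocallyIntegrableOn g (Set.Ico r₀ R))
    -- the differential equations off Z
    (hODEu : ∀ r ∈ Set.Ico r₀ R \ Z, u'' r - k ^ 2 * u r = f r)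
    (hODEv : ∀ r ∈ Set.Ico r₀ R \ Z, v'' r - k ^ 2 * v r = g r)
    -- the comparison hypotheses
    (hfg : ∀ r ∈ Set.Ico r₀ R \ Z, f r ≤ g r)
    (h0 : u r₀ ≤ v r₀)
    (h1 : u' r₀ - k * u r₀ ≤ v' r₀ - k * v r₀) :
    ∀ r ∈ Set.Ico r₀ R,
      (∃ α β : ℝ, r₀ ≤ α ∧ α < β ∧ β ≤ r ∧
        ∀ t ∈ Set.Icc α β \ Z, f t < g t) →
      u' r < v' r := by
  rintro r hr ⟨α, β, hr₀α, hαβ, hβr, hstrict⟩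
  have hrR : r < R := hr.2
  have hr₀r : r₀ ≤ r := hr.1
  have hsub : Icc r₀ r ⊆ Ico r₀ R := fun x hx => ⟨hx.1, lt_of_le_of_lt hx.2 hrR⟩
  -- the exceptional set restricted to [r₀, r] is finite
  set T : Set ℝ := Z ∩ Icc r₀ r with hTdef
  have hTfin : T.Finite := by
    by_contra hinf
    rw [Set.not_infinite.symm, not_not] at hinf
    obtain ⟨x, hxK, hacc⟩ :=
      hinf.exists_accPt_of_subset_isCompact isCompact_Icc inter_subset_right
    exact hZdisc x (hsub hxK)
      (hacc.mono (Filter.principal_mono.2 inter_subset_left))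
  have hTsub : ∀ x ∈ Icc r₀ r, x ∉ T → x ∉ Z := fun x hx hxT hxZ => hxT ⟨hxZ, hx⟩
  -- continuity of u, v
  have hucont : ContinuousOn u (Ico r₀ R) := fun x hx => (hu' x hx).continuousWithinAt
  have hvcont : ContinuousOn v (Ico r₀ R) := fun x hx => (hv' x hx).continuousWithinAt
  -- auxiliary functions
  set H : ℝ → ℝ := fun t => (v' t - u' t) - k * (v t - u t) with hHdef
  set F : ℝ → ℝ := fun t => Real.exp (k * t) * H t with hFdef
  set φ : ℝ → ℝ := fun t => Real.exp (k * t) * (g t - f t) with hφdef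
  have hHcont : ContinuousOn H (Ico r₀ R) :=
    (hv'cont.sub hu'cont).sub (continuousOn_const.mul (hvcont.sub hucont))
  have hexpc : Continuous fun t : ℝ => Real.exp (k * t) := by fun_prop
  have hFcont : ContinuousOn F (Icc r₀ r) :=
    (hexpc.continuousOn).mul (hHcont.mono hsub)
  -- derivative of F off Z
  have hFder : ∀ x, x ∈ Ico r₀ R → x ∉ Z → HasDerivWithinAt F (φ x) (Ioi x) x := by
    intro x hx hxZ
    have hxZ' : x ∈ Ico r₀ R \ Z := ⟨hx, hxZ⟩
    have hH : HasDerivWithinAt H ((v'' x - u'' x) - k * (v' x - u' x)) (Ico r₀ R) x :=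
      ((hv'' x hxZ').sub (hu'' x hxZ')).sub (((hv' x hx).sub (hu' x hx)).const_mul k)
    have hexp : HasDerivAt (fun t => Real.exp (k * t)) (Real.exp (k * x) * k) x := by
      simpa using ((hasDerivAt_id x).const_mul k).exp
    have hF : HasDerivWithinAt F
        (Real.exp (k * x) * k * H x +
          Real.exp (k * x) * ((v'' x - u'' x) - k * (v' x - u' x))) (Ico r₀ R) x :=
      (hexp.hasDerivWithinAt).mul hH
    have hmem : Ico r₀ R ∈ nhdsWithin x (Ioi x) :=
      Filter.mem_of_superset (Ioo_mem_nhdsGT_of_mem ⟨le_rfl, hx.2⟩)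
        (fun y hy => ⟨hx.1.trans hy.1.le, hy.2⟩)
    have hF' := hF.mono_of_mem_nhdsWithin hmem
    refine hF'.congr_deriv ?_
    have e1 := hODEu x hxZ'
    have e2 := hODEv x hxZ'
    simp only [hφdef, hHdef]
    rw [← e1, ← e2]
    ring
  -- integrability of φ on [r₀, r]
  have hfint : IntegrableOn f (Icc r₀ r) := hf.integrableOn_compact_subset hsub isCompact_Icc
  have hgint : IntegrableOn g (Icc r₀ r) := hg.integrableOn_compact_subset hsub isCompact_Icc
  have hφint : IntegrableOn φ (Icc r₀ r) :=
    MeasureTheory.IntegrableOn.continuousOn_mul hexpc.continuousOn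
      (hgint.sub hfint) isCompact_Icc
  -- a.e. nonnegativity of φ
  have hTnull : volume T = 0 := hTfin.measure_zero _
  have hZae : ∀ᵐ x ∂(volume : Measure ℝ), x ∉ T := measure_eq_zero_iff_ae_notMem.1 hTnull
  have hφnonneg : ∀ a b : ℝ, r₀ ≤ a → b ≤ r → a ≤ b → 0 ≤ ∫ y in a..b, φ y := by
    intro a b ha hb hab
    apply intervalIntegral.integral_nonneg_of_ae_restrict hab
    have h1 : ∀ᵐ x ∂(volume.restrict (Icc a b)), x ∉ T :=
      hZae.filter_mono (ae_mono Measure.restrict_le_self)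
    filter_upwards [h1, ae_restrict_mem measurableSet_Icc] with x hxT hxab
    have hxIcc : x ∈ Icc r₀ r := ⟨ha.trans hxab.1, hxab.2.trans hb⟩
    have hxZ : x ∉ Z := hTsub x hxIcc hxT
    have := hfg x ⟨hsub hxIcc, hxZ⟩
    exact mul_nonneg (Real.exp_pos _).le (by linarith)
  -- the strict positivity of the full integral
  have hstrictInt : 0 < ∫ y in r₀..r, φ y := by
    have hU : IsOpen (Ioo α β \ T) := isOpen_Ioo.sdiff hTfin.isClosed
    have hUne : (Ioo α β \ T).Nonempty := ((Set.Ioo_infinite hαβ).diff hTfin).nonempty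
    obtain ⟨c, hc⟩ := hUne
    obtain ⟨δ, hδ, hball⟩ := Metric.isOpen_iff.1 hU c hc
    set a' := c - δ/2 with ha'def
    set b' := c + δ/2 with hb'def
    have hsubball : Icc a' b' ⊆ Ioo α β \ T := by
      intro x hx
      apply hball
      rw [Metric.mem_ball, Real.dist_eq, abs_sub_lt_iff]
      constructor
      · have := hx.2; simp only [hb'def] at this; linarith
      · have := hx.1; simp only [ha'def] at this; linarith
    have ha'b' : a' < b' := by simp only [ha'def, hb'def]; linarith
    have hmema' := hsubball ⟨le_rfl, ha'b'.le⟩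
    have hmemb' := hsubball ⟨ha'b'.le, le_rfl⟩
    have hr₀a' : r₀ ≤ a' := hr₀α.trans hmema'.1.1.le
    have hb'r : b' ≤ r := hmemb'.1.2.le.trans hβr
    have hii : ∀ c d : ℝ, r₀ ≤ c → c ≤ d → d ≤ r → IntervalIntegrable φ volume c d := by
      intro c d hac hcd hdb
      rw [intervalIntegrable_iff_integrableOn_Icc_of_le hcd]
      exact hφint.mono_set (Icc_subset_Icc hac hdb)
    have hmid : 0 < ∫ y in a'..b', φ y := by
      apply intervalIntegral.intervalIntegral_pos_of_pos_on
        (hii a' b' hr₀a' ha'b'.le hb'r)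
      · intro x hx
        have hx' := hsubball ⟨hx.1.le, hx.2.le⟩
        have hxIcc : x ∈ Icc r₀ r := ⟨hr₀α.trans hx'.1.1.le, hx'.1.2.le.trans hβr⟩
        have hxZ : x ∉ Z := hTsub x hxIcc hx'.2
        have := hstrict x ⟨⟨hx'.1.1.le, hx'.1.2.le⟩, hxZ⟩
        exact mul_pos (Real.exp_pos _) (by linarith)
      · exact ha'b'
    have hsplit1 : (∫ y in r₀..a', φ y) + ∫ y in a'..b', φ y = ∫ y in r₀..b', φ y :=
      intervalIntegral.integral_add_adjacent_intervals
        (hii r₀ a' le_rfl hr₀a' (ha'b'.le.trans hb'r)) (hii a' b' hr₀a' ha'b'.le hb'r)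
    have hsplit2 : (∫ y in r₀..b', φ y) + ∫ y in b'..r, φ y = ∫ y in r₀..r, φ y :=
      intervalIntegral.integral_add_adjacent_intervals
        (hii r₀ b' le_rfl (hr₀a'.trans ha'b'.le) hb'r) (hii b' r (hr₀a'.trans ha'b'.le) hb'r le_rfl)
    have n1 := hφnonneg r₀ a' le_rfl (ha'b'.le.trans hb'r) hr₀a'
    have n2 := hφnonneg b' r (hr₀a'.trans ha'b'.le) le_rfl hb'r
    linarith
  -- key estimates for F
  have hkey : ∀ t ∈ Icc r₀ r, (∫ y in r₀..t, φ y) ≤ F t - F r₀ := by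
    intro t ht
    refine ftc_ineq_finite_except T hTfin F φ r₀ t ht.1
      (hFcont.mono (Icc_subset_Icc le_rfl ht.2)) ?_
      (hφint.mono_set (Icc_subset_Icc le_rfl ht.2))
    intro x hx hxT
    have hxIcc : x ∈ Icc r₀ r := ⟨hx.1.le, hx.2.le.trans ht.2⟩
    exact hFder x (hsub hxIcc) (hTsub x hxIcc hxT)
  have hF0 : 0 ≤ F r₀ := by
    have : 0 ≤ H r₀ := by simp only [hHdef]; linarith
    exact mul_nonneg (Real.exp_pos _).le this
  have hHt : ∀ t ∈ Icc r₀ r, 0 ≤ H t := by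
    intro t ht
    have h2 := hkey t ht
    have h3 := hφnonneg r₀ t le_rfl ht.2 ht.1
    have hFt : 0 ≤ Real.exp (k * t) * H t := by
      have : 0 ≤ F t := by linarith
      exact this
    nlinarith [Real.exp_pos (k * t)]
  have hFr : 0 < F r := by
    have := hkey r ⟨hr₀r, le_rfl⟩; linarith
  have hHr : 0 < H r := by
    have hFr' : 0 < Real.exp (k * r) * H r := hFr
    nlinarith [Real.exp_pos (k * r)]
  -- second step : w = v - u is nonnegative at r
  set G : ℝ → ℝ := fun t => Real.exp (-(k * t)) * (v t - u t) with hGdef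
  set ψ : ℝ → ℝ := fun t => Real.exp (-(k * t)) * H t with hψdef
  have hexpc2 : Continuous fun t : ℝ => Real.exp (-(k * t)) := by fun_prop
  have hGcont : ContinuousOn G (Icc r₀ r) :=
    hexpc2.continuousOn.mul ((hvcont.sub hucont).mono hsub)
  have hψcont : ContinuousOn ψ (Icc r₀ r) :=
    hexpc2.continuousOn.mul (hHcont.mono hsub)
  have hψint : IntegrableOn ψ (Icc r₀ r) := hψcont.integrableOn_compact isCompact_Icc
  have hGder : ∀ x ∈ Ioo r₀ r, x ∉ (∅ : Set ℝ) → HasDerivWithinAt G (ψ x) (Ioi x) x := by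
    intro x hx _
    have hxI : x ∈ Ico r₀ R := ⟨hx.1.le, hx.2.trans hrR⟩
    have hexp : HasDerivAt (fun t => Real.exp (-(k * t))) (Real.exp (-(k * x)) * (-k)) x := by
      simpa using (((hasDerivAt_id x).const_mul k).neg).exp
    have hw : HasDerivWithinAt (fun t => v t - u t) (v' x - u' x) (Ico r₀ R) x :=
      (hv' x hxI).sub (hu' x hxI)
    have hG : HasDerivWithinAt G
        (Real.exp (-(k * x)) * (-k) * (v x - u x) + Real.exp (-(k * x)) * (v' x - u' x))
        (Ico r₀ R) x := (hexp.hasDerivWithinAt).mul hw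
    have hmem : Ico r₀ R ∈ nhdsWithin x (Ioi x) :=
      Filter.mem_of_superset (Ioo_mem_nhdsGT_of_mem ⟨le_rfl, hxI.2⟩)
        (fun y hy => ⟨hxI.1.trans hy.1.le, hy.2⟩)
    have hG' := hG.mono_of_mem_nhdsWithin hmem
    refine hG'.congr_deriv ?_
    simp only [hψdef, hHdef]
    ring
  have hGkey := ftc_ineq_finite_except ∅ finite_empty G ψ r₀ r hr₀r hGcont hGder hψint
  have hψnonneg : 0 ≤ ∫ y in r₀..r, ψ y :=
    intervalIntegral.integral_nonneg hr₀r
      (fun x hx => mul_nonneg (Real.exp_pos _).le (hHt x hx))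
  have hG0 : 0 ≤ G r₀ := mul_nonneg (Real.exp_pos _).le (by linarith)
  have hGr : 0 ≤ G r := by linarith
  have hwr : 0 ≤ v r - u r := by
    have hGr' : 0 ≤ Real.exp (-(k * r)) * (v r - u r) := hGr
    nlinarith [Real.exp_pos (-(k * r))]
  simp only [hHdef] at hHr
  nlinarith
end

section
/- Let k>0, 0 ≤ r₀ < R, let χ₀ ∈ ℝ, and let Z be a discrete subset of [r₀,R). Let a : [r₀,R) → ℝ be continuously differentiable on [r₀,R), twice differentiable at every point of [r₀,R)∖Z, and satisfy: (i) a''(r) − k²·a(r) ≤ 2π·χ₀ for all r ∈ [r₀,R)∖Z; (ii) a(r₀) ≤ (2π/k²)·(cosh(k·r₀) − 1); (iii) a'(r₀) ≤ (2π/k)·sinh(k·r₀). Then for every r ∈ (r₀,R): (1 − χ₀)·sinh(k·(r − r₀)) ≤ sinh(k·r) − (k/(2π))·a'(r). Equivalently, 1 − χ₀ ≤ (1/sinh(k·(r−r₀)))·( sinh(k·r) − k·a'(r)/(2π) ). -/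
open Set MeasureTheory Real

private noncomputable def bfn (k r₀ c d e : ℝ) (r : ℝ) : ℝ :=
  c * Real.cosh (k * (r - r₀)) + d * Real.sinh (k * (r - r₀)) - e

private noncomputable def b1fn (k r₀ c d : ℝ) (r : ℝ) : ℝ :=
  k * (c * Real.sinh (k * (r - r₀)) + d * Real.cosh (k * (r - r₀)))

private noncomputable def b2fn (k r₀ c d : ℝ) (r : ℝ) : ℝ :=
  k * (k * (c * Real.cosh (k * (r - r₀)) + d * Real.sinh (k * (r - r₀))))

private lemma inner_deriv (k r₀ x : ℝ) : HasDerivAt (fun r : ℝ => k * (r - r₀)) k x := by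
  simpa using ((hasDerivAt_id x).sub_const r₀).const_mul k

private lemma bfn_deriv (k r₀ c d e x : ℝ) :
    HasDerivAt (bfn k r₀ c d e) (b1fn k r₀ c d x) x := by
  have h := inner_deriv k r₀ x
  have h1 := (h.cosh).const_mul c
  have h2 := (h.sinh).const_mul d
  unfold bfn b1fn
  refine ((h1.add h2).sub_const e).congr_deriv ?_
  ring

private lemma b1fn_deriv (k r₀ c d x : ℝ) :
    HasDerivAt (b1fn k r₀ c d) (b2fn k r₀ c d x) x := by
  have h := inner_deriv k r₀ x
  have h1 := (h.sinh).const_mul c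
  have h2 := (h.cosh).const_mul d
  unfold b1fn b2fn
  refine ((h1.add h2).const_mul k).congr_deriv ?_
  ring

private lemma bfn_cont (k r₀ c d e : ℝ) : Continuous (bfn k r₀ c d e) := by
  unfold bfn; fun_prop

private lemma b1fn_cont (k r₀ c d : ℝ) : Continuous (b1fn k r₀ c d) := by
  unfold b1fn; fun_prop

private lemma myStep0 {f f' : ℝ → ℝ} {c d : ℝ} (hcd : c ≤ d) (hf : ContinuousOn f (Icc c d))
    (hder : ∀ x ∈ Ioo c d, HasDerivAt f (f' x) x) (hneg : ∀ x ∈ Ioo c d, f' x ≤ 0) :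
    f d ≤ f c := by
  have H : AntitoneOn f (Icc c d) := by
    apply antitoneOn_of_deriv_nonpos (convex_Icc c d) hf
    · intro x hx
      rw [interior_Icc] at hx
      exact ((hder x hx).differentiableAt).differentiableWithinAt
    · intro x hx
      rw [interior_Icc] at hx
      rw [(hder x hx).deriv]
      exact hneg x hx
  exact H (left_mem_Icc.mpr hcd) (right_mem_Icc.mpr hcd) hcd

private lemma myKey : ∀ (n : ℕ) (S : Finset ℝ) (f f' : ℝ → ℝ) (c d : ℝ), S.card ≤ n → c ≤ d →
    ContinuousOn f (Icc c d) →
    (∀ x ∈ Ioo c d, x ∉ S → HasDerivAt f (f' x) x) →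
    (∀ x ∈ Ioo c d, x ∉ S → f' x ≤ 0) → f d ≤ f c := by
  intro n
  induction n with
  | zero =>
    intro S f f' c d hcard hcd hf hder hneg
    have hS : S = ∅ := Finset.card_eq_zero.mp (le_antisymm hcard (Nat.zero_le _))
    exact myStep0 hcd hf (fun x hx => hder x hx (by simp [hS])) (fun x hx => hneg x hx (by simp [hS]))
  | succ n ih =>
    intro S f f' c d hcard hcd hf hder hneg
    by_cases hS : ∃ m ∈ S, m ∈ Ioo c d
    · obtain ⟨m, hmS, hm⟩ := hS
      have hcard' : (S.erase m).card ≤ n := by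
        have := Finset.card_erase_of_mem hmS; omega
      have h1 : f m ≤ f c := ih (S.erase m) f f' c m hcard' hm.1.le
          (hf.mono (Icc_subset_Icc le_rfl hm.2.le))
          (fun x hx hxE => hder x ⟨hx.1, hx.2.trans hm.2⟩
            (fun hxS => hxE (Finset.mem_erase.mpr ⟨ne_of_lt hx.2, hxS⟩)))
          (fun x hx hxE => hneg x ⟨hx.1, hx.2.trans hm.2⟩
            (fun hxS => hxE (Finset.mem_erase.mpr ⟨ne_of_lt hx.2, hxS⟩)))
      have h2 : f d ≤ f m := ih (S.erase m) f f' m d hcard' hm.2.le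
          (hf.mono (Icc_subset_Icc hm.1.le le_rfl))
          (fun x hx hxE => hder x ⟨hm.1.trans hx.1, hx.2⟩
            (fun hxS => hxE (Finset.mem_erase.mpr ⟨ne_of_gt hx.1, hxS⟩)))
          (fun x hx hxE => hneg x ⟨hm.1.trans hx.1, hx.2⟩
            (fun hxS => hxE (Finset.mem_erase.mpr ⟨ne_of_gt hx.1, hxS⟩)))
      exact h2.trans h1
    · push_neg at hS
      exact myStep0 hcd hf (fun x hx => hder x hx (fun h => hS x h hx))
        (fun x hx => hneg x hx (fun h => hS x h hx))

private lemma myMono (r₀ R : ℝ) (Z : Set ℝ)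
    (hZdisc : ∀ x ∈ Set.Ico r₀ R, ¬ AccPt x (Filter.principal Z))
    (f f' : ℝ → ℝ) (hf : ContinuousOn f (Set.Ico r₀ R))
    (hder : ∀ x ∈ Ioo r₀ R, x ∉ Z → HasDerivAt f (f' x) x)
    (hneg : ∀ x ∈ Ioo r₀ R, x ∉ Z → f' x ≤ 0) :
    ∀ r ∈ Set.Ico r₀ R, f r ≤ f r₀ := by
  classical
  intro r hr
  have hsub : Icc r₀ r ⊆ Ico r₀ R := fun x hx => ⟨hx.1, lt_of_le_of_lt hx.2 hr.2⟩
  have hfin : (Z ∩ Icc r₀ r).Finite := by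
    by_contra h
    have hinf : (Z ∩ Icc r₀ r).Infinite := h
    obtain ⟨x, hxK, hx⟩ := hinf.exists_accPt_of_subset_isCompact isCompact_Icc
      Set.inter_subset_right
    exact hZdisc x (hsub hxK) (hx.mono (Filter.principal_mono.mpr Set.inter_subset_left))
  apply myKey hfin.toFinset.card hfin.toFinset f f' r₀ r le_rfl hr.1 (hf.mono hsub)
  · intro x hx hxS
    exact hder x ⟨hx.1, hx.2.trans hr.2⟩
      (fun hz => hxS (hfin.mem_toFinset.mpr ⟨hz, hx.1.le, hx.2.le⟩))
  · intro x hx hxS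
    exact hneg x ⟨hx.1, hx.2.trans hr.2⟩
      (fun hz => hxS (hfin.mem_toFinset.mpr ⟨hz, hx.1.le, hx.2.le⟩))

/-- Analytic core of the bound on the topology of metric balls: if `a` (the
area function of metric balls) is `C¹` on `[r₀, R)`, twice differentiable off a
discrete set `Z`, satisfies the Gauss–Bonnet differential inequality
`a'' − k²a ≤ 2πχ₀` off `Z`, and the comparison initial bounds at `r₀`, then
`(1 − χ₀)·sinh(k(r−r₀)) ≤ sinh(kr) − k·a'(r)/(2π)` for all `r ∈ (r₀, R)`. -/
theorem stmt_3
    (k r₀ R χ₀ : ℝ) (hk : 0 < k) (hr₀ : 0 ≤ r₀) (hr : r₀ < R)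
    (Z : Set ℝ) (hZ : Z ⊆ Set.Ico r₀ R)
    (hZdisc : ∀ x ∈ Set.Ico r₀ R, ¬ AccPt x (Filter.principal Z))
    (a a' a'' : ℝ → ℝ)
    -- a is C¹ on [r₀, R), with derivative a'
    (ha' : ∀ r ∈ Set.Ico r₀ R, HasDerivWithinAt a (a' r) (Set.Ico r₀ R) r)
    (ha'cont : ContinuousOn a' (Set.Ico r₀ R))
    -- and twice differentiable off Z, with second derivative a''
    (ha'' : ∀ r ∈ Set.Ico r₀ R \ Z, HasDerivWithinAt a' (a'' r) (Set.Ico r₀ R) r)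
    -- (i) the Gauss–Bonnet differential inequality
    (hGB : ∀ r ∈ Set.Ico r₀ R \ Z, a'' r - k ^ 2 * a r ≤ 2 * π * χ₀)
    -- (ii) area comparison at r₀
    (hA : a r₀ ≤ 2 * π / k ^ 2 * (Real.cosh (k * r₀) - 1))
    -- (iii) boundary-length comparison at r₀
    (hL : a' r₀ ≤ 2 * π / k * Real.sinh (k * r₀)) :
    ∀ r, r₀ < r → r < R →
      (1 - χ₀) * Real.sinh (k * (r - r₀))
        ≤ Real.sinh (k * r) - k / (2 * π) * a' r := by
  have hk0 : k ≠ 0 := ne_of_gt hk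
  have hπ : (0:ℝ) < π := Real.pi_pos
  set c : ℝ := 2 * π / k ^ 2 * (Real.cosh (k * r₀) - 1 + χ₀) with hc
  set d : ℝ := 2 * π / k ^ 2 * Real.sinh (k * r₀) with hd
  set e : ℝ := 2 * π * χ₀ / k ^ 2 with he
  have hke : k ^ 2 * e = 2 * π * χ₀ := by rw [he]; field_simp
  -- values at r₀
  have hb0 : bfn k r₀ c d e r₀ = 2 * π / k ^ 2 * (Real.cosh (k * r₀) - 1) := by
    simp only [bfn, sub_self, mul_zero, Real.cosh_zero, Real.sinh_zero, hc, he]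
    ring
  have hb10 : b1fn k r₀ c d r₀ = 2 * π / k * Real.sinh (k * r₀) := by
    simp only [b1fn, sub_self, mul_zero, Real.cosh_zero, Real.sinh_zero, hd]
    field_simp
    ring
  -- continuity of a on the interval
  have hacont : ContinuousOn a (Set.Ico r₀ R) := fun x hx => (ha' x hx).continuousWithinAt
  -- derivatives upgraded to HasDerivAt at interior points
  have hmem : ∀ x ∈ Ioo r₀ R, Set.Ico r₀ R ∈ nhds x := fun x hx =>
    Filter.mem_of_superset (Ioo_mem_nhds hx.1 hx.2) Ioo_subset_Ico_self
  have haD : ∀ x ∈ Ioo r₀ R, HasDerivAt a (a' x) x := fun x hx =>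
    (ha' x ⟨hx.1.le, hx.2⟩).hasDerivAt (hmem x hx)
  have ha'D : ∀ x ∈ Ioo r₀ R, x ∉ Z → HasDerivAt a' (a'' x) x := fun x hx hz =>
    (ha'' x ⟨⟨hx.1.le, hx.2⟩, hz⟩).hasDerivAt (hmem x hx)
  -- Step 1: ψ := (a' - b1) + k (a - b) is nonpositive on [r₀, R)
  have hψ0 : a' r₀ - b1fn k r₀ c d r₀ + k * (a r₀ - bfn k r₀ c d e r₀) ≤ 0 := by
    rw [hb0, hb10]
    nlinarith [hA, hL, hk]
  have hψ : ∀ r ∈ Set.Ico r₀ R,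
      a' r - b1fn k r₀ c d r + k * (a r - bfn k r₀ c d e r) ≤ 0 := by
    have hmono := myMono r₀ R Z hZdisc
      (fun r => Real.exp (-(k * r)) * (a' r - b1fn k r₀ c d r + k * (a r - bfn k r₀ c d e r)))
      (fun x => Real.exp (-(k * x)) * (-(k * 1)) *
          (a' x - b1fn k r₀ c d x + k * (a x - bfn k r₀ c d e x)) +
        Real.exp (-(k * x)) *
          ((a'' x - b2fn k r₀ c d x) + k * (a' x - b1fn k r₀ c d x)))
      ?_ ?_ ?_
    · intro r hrr
      have h1 : Real.exp (-(k * r₀)) *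
          (a' r₀ - b1fn k r₀ c d r₀ + k * (a r₀ - bfn k r₀ c d e r₀)) ≤ 0 :=
        mul_nonpos_of_nonneg_of_nonpos (Real.exp_pos _).le hψ0
      have h2 : Real.exp (-(k * r)) *
          (a' r - b1fn k r₀ c d r + k * (a r - bfn k r₀ c d e r)) ≤ 0 :=
        le_trans (hmono r hrr) h1
      nlinarith [Real.exp_pos (-(k * r)), h2]
    · -- continuity
      apply ContinuousOn.mul
      · exact (Real.continuous_exp.comp (by fun_prop)).continuousOn
      · exact ((ha'cont.sub (b1fn_cont k r₀ c d).continuousOn).add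
          (((hacont.sub (bfn_cont k r₀ c d e).continuousOn)).const_smul k)).congr
          (fun x _ => by simp [smul_eq_mul])
    · -- derivative
      intro x hx hz
      have hE : HasDerivAt (fun r => Real.exp (-(k * r))) (Real.exp (-(k * x)) * (-(k * 1))) x :=
        (((hasDerivAt_id x).const_mul k).neg).exp
      have hψD : HasDerivAt
          (fun r => a' r - b1fn k r₀ c d r + k * (a r - bfn k r₀ c d e r))
          ((a'' x - b2fn k r₀ c d x) + k * (a' x - b1fn k r₀ c d x)) x :=
        ((ha'D x hx hz).sub (b1fn_deriv k r₀ c d x)).add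
          (((haD x hx).sub (bfn_deriv k r₀ c d e x)).const_mul k)
      exact hE.mul hψD
    · -- nonpositivity of the derivative
      intro x hx hz
      have hgb := hGB x ⟨⟨hx.1.le, hx.2⟩, hz⟩
      have hEq : Real.exp (-(k * x)) * (-(k * 1)) *
          (a' x - b1fn k r₀ c d x + k * (a x - bfn k r₀ c d e x)) +
        Real.exp (-(k * x)) *
          ((a'' x - b2fn k r₀ c d x) + k * (a' x - b1fn k r₀ c d x))
          = Real.exp (-(k * x)) * (a'' x - k ^ 2 * a x - k ^ 2 * e) := by
        simp only [b1fn, b2fn, bfn]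
        ring
      refine le_of_eq_of_le hEq ?_
      apply mul_nonpos_of_nonneg_of_nonpos (Real.exp_pos _).le
      linarith
  -- Step 2: g := a - b is nonpositive on [r₀, R)
  have hg : ∀ r ∈ Set.Ico r₀ R, a r - bfn k r₀ c d e r ≤ 0 := by
    have hmono := myMono r₀ R Z hZdisc
      (fun r => Real.exp (k * r) * (a r - bfn k r₀ c d e r))
      (fun x => Real.exp (k * x) * (k * 1) * (a x - bfn k r₀ c d e x) +
        Real.exp (k * x) * (a' x - b1fn k r₀ c d x))
      ?_ ?_ ?_
    · intro r hrr
      have hg0 : a r₀ - bfn k r₀ c d e r₀ ≤ 0 := by rw [hb0]; linarith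
      have h1 : Real.exp (k * r₀) * (a r₀ - bfn k r₀ c d e r₀) ≤ 0 :=
        mul_nonpos_of_nonneg_of_nonpos (Real.exp_pos _).le hg0
      have h2 : Real.exp (k * r) * (a r - bfn k r₀ c d e r) ≤ 0 :=
        le_trans (hmono r hrr) h1
      nlinarith [Real.exp_pos (k * r), h2]
    · exact (Real.continuous_exp.comp (by fun_prop)).continuousOn.mul
        (hacont.sub (bfn_cont k r₀ c d e).continuousOn)
    · intro x hx _
      have hE : HasDerivAt (fun r => Real.exp (k * r)) (Real.exp (k * x) * (k * 1)) x :=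
        ((hasDerivAt_id x).const_mul k).exp
      exact hE.mul ((haD x hx).sub (bfn_deriv k r₀ c d e x))
    · intro x hx _
      have hψx := hψ x ⟨hx.1.le, hx.2⟩
      have hEq : Real.exp (k * x) * (k * 1) * (a x - bfn k r₀ c d e x) +
          Real.exp (k * x) * (a' x - b1fn k r₀ c d x)
          = Real.exp (k * x) *
            (a' x - b1fn k r₀ c d x + k * (a x - bfn k r₀ c d e x)) := by ring
      exact le_of_eq_of_le hEq (mul_nonpos_of_nonneg_of_nonpos (Real.exp_pos _).le hψx)
  -- Step 3: a' - b1 is nonpositive on [r₀, R)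
  have hg' : ∀ r ∈ Set.Ico r₀ R, a' r - b1fn k r₀ c d r ≤ 0 := by
    have hmono := myMono r₀ R Z hZdisc
      (fun r => a' r - b1fn k r₀ c d r)
      (fun x => a'' x - b2fn k r₀ c d x)
      (ha'cont.sub (b1fn_cont k r₀ c d).continuousOn)
      (fun x hx hz => (ha'D x hx hz).sub (b1fn_deriv k r₀ c d x))
      ?_
    · intro r hrr
      have h0 := hmono r hrr
      have h1 : a' r₀ - b1fn k r₀ c d r₀ ≤ 0 := by rw [hb10]; linarith
      exact h0.trans h1
    · intro x hx hz
      have hgb := hGB x ⟨⟨hx.1.le, hx.2⟩, hz⟩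
      have hgx := hg x ⟨hx.1.le, hx.2⟩
      have hb2 : b2fn k r₀ c d x = k ^ 2 * bfn k r₀ c d e x + k ^ 2 * e := by
        simp only [b2fn, bfn]; ring
      show a'' x - b2fn k r₀ c d x ≤ 0
      nlinarith [mul_nonneg (sq_nonneg k) (neg_nonneg.mpr hgx)]
  -- conclusion
  intro r hr1 hr2
  have hfinal := hg' r ⟨hr1.le, hr2⟩
  have hsinh : Real.sinh (k * r) =
      Real.sinh (k * r₀) * Real.cosh (k * (r - r₀)) +
      Real.cosh (k * r₀) * Real.sinh (k * (r - r₀)) := by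
    rw [show k * r = k * r₀ + k * (r - r₀) by ring, Real.sinh_add]
  have hb1r : k / (2 * π) * b1fn k r₀ c d r =
      (Real.cosh (k * r₀) - 1 + χ₀) * Real.sinh (k * (r - r₀)) +
      Real.sinh (k * r₀) * Real.cosh (k * (r - r₀)) := by
    simp only [b1fn, hc, hd]
    field_simp
  have hmul : k / (2 * π) * a' r ≤ k / (2 * π) * b1fn k r₀ c d r := by
    apply mul_le_mul_of_nonneg_left (by linarith) (by positivity)
  rw [hsinh]
  linarith [hmul, hb1r.le, hb1r.ge]
end
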